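/- Let A be a unital C*-algebra, a a nonzero positive element of A, and x ∈ A admitting an a-adjoint x^{#a}, with ‖x‖_a < ∞ and ‖x^{#a}‖_a < ∞. Then for every Orlicz function φ, φ(v_a(x)²) ≤ (1/2)·φ(v_a(x²)) + (1/2)·φ(‖x x^{#a} + x^{#a} x‖_a / 2). -/

import Mathlib

open scoped ComplexOrder

section

variable {A : Type*} [CStarAlgebra A] [PartialOrder A] [StarOrderedRing A]

/-- A positive linear functional on `A`: `f (x* x) ≥ 0` for all `x`. -/
def IsPosLF (f : A →ₗ[ℂ] ℂ) : Prop := ∀ x : A, 0 ≤ f (star x * x)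

/-- Membership in `S_a(A)`: positive linear functionals `f` with `f a = 1`. -/
def MemSa (a : A) (f : A →ₗ[ℂ] ℂ) : Prop := IsPosLF f ∧ f a = 1

/-- The set of values whose supremum is the `a`-seminorm `‖x‖ₐ`. -/
def aNormSet (a x : A) : Set ℝ :=
  {r : ℝ | ∃ f : A →ₗ[ℂ] ℂ, MemSa a f ∧ r = Real.sqrt (f (star x * a * x)).re}

/-- The `a`-seminorm `‖x‖ₐ = sup {√(f(x* a x)) : f ∈ S_a(A)}`. -/
noncomputable def aNorm (a x : A) : ℝ := sSup (aNormSet a x)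

/-- The `a`-numerical radius `vₐ(x) = sup {|f(a x)| : f ∈ S_a(A)}`. -/
noncomputable def aNR (a x : A) : ℝ :=
  sSup {r : ℝ | ∃ f : A →ₗ[ℂ] ℂ, MemSa a f ∧ r = ‖f (a * x)‖}

/-- An Orlicz function: `φ : [0,∞) → [0,∞)` (modelled on `ℝ`) which is continuous, convex,
non-decreasing on `[0,∞)`, with `φ 0 = 0`, `φ u > 0` for `u > 0`, and `φ u → ∞` as `u → ∞`. -/
structure IsOrlicz (φ : ℝ → ℝ) : Prop where
  continuousOn : ContinuousOn φ (Set.Ici 0)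
  convexOn : ConvexOn ℝ (Set.Ici 0) φ
  monotoneOn : MonotoneOn φ (Set.Ici 0)
  map_zero : φ 0 = 0
  pos : ∀ u : ℝ, 0 < u → 0 < φ u
  tendsto_atTop : Filter.Tendsto φ Filter.atTop Filter.atTop

end

/-!
Fix a state `f ∈ S_a(A)`, choose `|c| = 1` with `c f(ax) = |f(ax)|` and put
`H = (c x + c̄ x^{#a}) / 2`. Then `H` is its own `a`-adjoint and `f(aH) = |f(ax)|`, so the
Cauchy–Schwarz inequality for the semi-inner product `(y, z) ↦ f(z* a y)` (realised in the GNS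
space of `f` via `a^{1/2}`) gives `|f(ax)|² ≤ f(H* a H) = f(aH²)`. Expanding
`4 H² = c² x² + (x x^{#a} + x^{#a} x) + c̄² (x^{#a})²`, where `f(a (x^{#a})²)` is the conjugate of
`f(a x²)`, bounds this by `vₐ(x²)/2 + ‖x x^{#a} + x^{#a} x‖ₐ/4`. Taking the supremum over `f`,
monotonicity and convexity of `φ` finish the proof. The finiteness of `‖x‖ₐ` and `‖x^{#a}‖ₐ`
keeps all suprema involved finite, by submultiplicativity and the triangle inequality for `‖·‖ₐ`.
-/

open scoped InnerProductSpace

lemma ConvexOn.apply_le_midpoint_of_le {s : Set ℝ} {φ : ℝ → ℝ} (hconv : ConvexOn ℝ s φ)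
    (hmono : MonotoneOn φ s) {t u v : ℝ} (ht : t ∈ s) (hu : u ∈ s) (hv : v ∈ s)
    (h : t ≤ (u + v) / 2) : φ t ≤ 1 / 2 * φ u + 1 / 2 * φ v := by
  have hmid : (1 / 2 : ℝ) • u + (1 / 2 : ℝ) • v = (u + v) / 2 := by
    rw [smul_eq_mul, smul_eq_mul]; ring
  have h₀ : (0 : ℝ) ≤ 1 / 2 := by norm_num
  have h₁ : (1 / 2 : ℝ) + 1 / 2 = 1 := by norm_num
  have hs : (u + v) / 2 ∈ s := hmid ▸ hconv.1 hu hv h₀ h₀ h₁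
  have hφ := hconv.2 hu hv h₀ h₀ h₁
  rw [hmid, smul_eq_mul, smul_eq_mul] at hφ
  exact (hmono ht hs h).trans hφ

lemma Complex.exists_norm_eq_one_mul_eq_norm (s : ℂ) : ∃ c : ℂ, ‖c‖ = 1 ∧ c * s = ‖s‖ := by
  refine ⟨Complex.exp ((-s.arg : ℝ) * Complex.I), Complex.norm_exp_ofReal_mul_I _, ?_⟩
  conv_lhs => rw [← Complex.norm_mul_exp_arg_mul_I s]
  rw [mul_left_comm, ← Complex.exp_add]
  push_cast
  simp

section aRealPart

variable {R : Type*} [Ring R] [Algebra ℂ R]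

/-- The `a`-real part `(x + x^{#a}) / 2` of `x`, written in terms of `x` and `y = x^{#a}`. -/
noncomputable def aRealPart (x y : R) : R := (2 : ℂ)⁻¹ • (x + y)

lemma aRealPart_mul_self (x y : R) :
    aRealPart x y * aRealPart x y = (4 : ℂ)⁻¹ • (x * x + (x * y + y * x) + y * y) := by
  simp only [aRealPart, add_mul, mul_add, smul_mul_assoc, mul_smul_comm]
  module

end aRealPart

section IsAAdjoint

variable {R : Type*} [Ring R] [StarRing R]

def IsAAdjoint (a x y : R) : Prop := a * y = star x * a

variable {a x y x' y' : R}

lemma IsAAdjoint.symm (ha : IsSelfAdjoint a) (h : IsAAdjoint a x y) : IsAAdjoint a y x := by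
  have h' := congrArg star h
  rw [star_mul, star_mul, ha.star_eq, star_star] at h'
  exact h'.symm

lemma IsAAdjoint.add (hx : IsAAdjoint a x x') (hy : IsAAdjoint a y y') :
    IsAAdjoint a (x + y) (x' + y') := by
  rw [IsAAdjoint, mul_add, hx, hy, star_add, add_mul]

lemma IsAAdjoint.mul (hx : IsAAdjoint a x x') (hy : IsAAdjoint a y y') :
    IsAAdjoint a (x * y) (y' * x') := by
  rw [IsAAdjoint, ← mul_assoc, hy, mul_assoc, hx, star_mul, mul_assoc]

lemma IsAAdjoint.star_mul_mul_self (h : IsAAdjoint a x x) : star x * a * x = a * (x * x) := by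
  rw [← h, mul_assoc]

variable [Algebra ℂ R] [StarModule ℂ R]

lemma IsAAdjoint.smul (h : IsAAdjoint a x y) (c : ℂ) : IsAAdjoint a (c • x) (star c • y) := by
  rw [IsAAdjoint, mul_smul_comm, h, star_smul, smul_mul_assoc]

lemma IsAAdjoint.aRealPart (ha : IsSelfAdjoint a) (h : IsAAdjoint a x y) :
    IsAAdjoint a (aRealPart x y) (aRealPart x y) := by
  have := (h.add (h.symm ha)).smul (2 : ℂ)⁻¹
  rwa [add_comm y, star_inv₀, star_ofNat] at this

end IsAAdjoint

section

variable {A : Type*} [CStarAlgebra A]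

namespace IsPosLF

variable {f g : A →ₗ[ℂ] ℂ}

lemma add (hf : IsPosLF f) (hg : IsPosLF g) : IsPosLF (f + g) :=
  fun y => add_nonneg (hf y) (hg y)

lemma smul (hf : IsPosLF f) {c : ℝ} (hc : 0 ≤ c) : IsPosLF ((c : ℂ) • f) :=
  fun y => mul_nonneg (by exact_mod_cast hc) (hf y)

lemma comp_conj (hf : IsPosLF f) (u : A) :
    IsPosLF (f ∘ₗ LinearMap.mulLeft ℂ (star u) ∘ₗ LinearMap.mulRight ℂ u) := fun y => by
  simpa [mul_assoc] using hf (y * u)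

end IsPosLF

section aNorm

variable {a b w : A} {f g : A →ₗ[ℂ] ℂ}

lemma aNorm_nonneg (a y : A) : 0 ≤ aNorm a y :=
  Real.sSup_nonneg (by rintro r ⟨f, -, rfl⟩; exact Real.sqrt_nonneg _)

lemma aNR_nonneg (a y : A) : 0 ≤ aNR a y :=
  Real.sSup_nonneg (by rintro r ⟨f, -, rfl⟩; exact norm_nonneg _)

lemma aNR_sq_le {C : ℝ} (hC : 0 ≤ C) (h : ∀ f, MemSa a f → ‖f (a * w)‖ ^ 2 ≤ C) :
    aNR a w ^ 2 ≤ C := by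
  have hle : aNR a w ≤ √C :=
    Real.sSup_le (by rintro r ⟨f, hf, rfl⟩; exact Real.le_sqrt_of_sq_le (h f hf))
      (Real.sqrt_nonneg C)
  calc aNR a w ^ 2 ≤ √C ^ 2 := pow_le_pow_left₀ (aNR_nonneg a w) hle 2
    _ = C := Real.sq_sqrt hC

lemma MemSa.sqrt_re_le_aNorm (hf : MemSa a f) (hw : BddAbove (aNormSet a w)) :
    √(f (star w * a * w)).re ≤ aNorm a w :=
  le_csSup hw ⟨f, hf, rfl⟩

lemma MemSa.re_le_aNorm_sq (hf : MemSa a f) (hw : BddAbove (aNormSet a w)) :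
    (f (star w * a * w)).re ≤ aNorm a w ^ 2 :=
  (Real.sqrt_le_iff.mp (hf.sqrt_re_le_aNorm hw)).2

lemma MemSa.norm_apply_mul_le_aNR (hf : MemSa a f)
    (hw : BddAbove {r : ℝ | ∃ f : A →ₗ[ℂ] ℂ, MemSa a f ∧ r = ‖f (a * w)‖}) :
    ‖f (a * w)‖ ≤ aNR a w :=
  le_csSup hw ⟨f, hf, rfl⟩

lemma IsPosLF.re_apply_le_aNorm_sq_mul (hg : IsPosLF g) {t : ℝ} (ht : 0 < t) (hga : g a = t)
    (hb : BddAbove (aNormSet a b)) : (g (star b * a * b)).re ≤ aNorm a b ^ 2 * t := by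
  have hm : MemSa a ((t : ℂ)⁻¹ • g) :=
    ⟨by simpa using hg.smul (inv_nonneg.2 ht.le), by simp [hga, ht.ne']⟩
  have := hm.re_le_aNorm_sq hb
  rw [LinearMap.smul_apply, smul_eq_mul, ← Complex.ofReal_inv, Complex.re_ofReal_mul,
    inv_mul_le_iff₀ ht] at this
  linarith

end aNorm

variable [PartialOrder A] [StarOrderedRing A]

namespace IsPosLF

variable {f : A →ₗ[ℂ] ℂ}

lemma map_nonneg (hf : IsPosLF f) {y : A} (hy : 0 ≤ y) : 0 ≤ f y := by
  rw [StarOrderedRing.nonneg_iff] at hy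
  induction hy using AddSubmonoid.closure_induction with
  | mem _ h => obtain ⟨s, rfl⟩ := h; exact hf s
  | zero => simp
  | add _ _ _ _ h₁ h₂ => rw [map_add]; exact add_nonneg h₁ h₂

lemma re_apply_nonneg (hf : IsPosLF f) {y : A} (hy : 0 ≤ y) : 0 ≤ (f y).re :=
  (Complex.nonneg_iff.mp (hf.map_nonneg hy)).1

lemma apply_eq_re (hf : IsPosLF f) {y : A} (hy : 0 ≤ y) : f y = (f y).re :=
  Complex.eq_re_of_ofReal_le (r := 0) (by rw [Complex.ofReal_zero]; exact hf.map_nonneg hy)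

noncomputable def toPositiveLinearMap (hf : IsPosLF f) : A →ₚ[ℂ] ℂ :=
  PositiveLinearMap.mk₀ f fun _ => hf.map_nonneg

@[simp]
lemma toPositiveLinearMap_apply (hf : IsPosLF f) (y : A) : hf.toPositiveLinearMap y = f y := rfl

lemma map_star (hf : IsPosLF f) (y : A) : f (star y) = star (f y) :=
  StarHomClass.map_star hf.toPositiveLinearMap y

lemma apply_mul_of_isAAdjoint (hf : IsPosLF f) {a x y : A} (ha : IsSelfAdjoint a)
    (h : IsAAdjoint a x y) : f (a * y) = star (f (a * x)) := by
  rw [h, ← hf.map_star, star_mul, ha.star_eq]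

end IsPosLF

lemma star_sqrt_mul_mul_sqrt_mul {a : A} (ha : 0 ≤ a) (y z : A) :
    star (CFC.sqrt a * y) * (CFC.sqrt a * z) = star y * a * z := by
  rw [star_mul, (CFC.sqrt_nonneg a).isSelfAdjoint.star_eq, mul_assoc, ← mul_assoc (CFC.sqrt a),
    CFC.sqrt_mul_sqrt_self a ha, ← mul_assoc]

namespace PositiveLinearMap

variable (p : A →ₚ[ℂ] ℂ) {a : A}

lemma inner_toPreGNS_sqrt_mul (ha : 0 ≤ a) (y z : A) :
    ⟪p.toPreGNS (CFC.sqrt a * y), p.toPreGNS (CFC.sqrt a * z)⟫_ℂ = p (star y * a * z) := by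
  rw [preGNS_inner_def, ofPreGNS_toPreGNS, ofPreGNS_toPreGNS, star_sqrt_mul_mul_sqrt_mul ha]

lemma norm_toPreGNS_sqrt_mul (ha : 0 ≤ a) (y : A) :
    ‖p.toPreGNS (CFC.sqrt a * y)‖ = √(p (star y * a * y)).re := by
  rw [preGNS_norm_def, ofPreGNS_toPreGNS, star_sqrt_mul_mul_sqrt_mul ha]

lemma norm_apply_mul_le (ha : 0 ≤ a) (w : A) :
    ‖p (a * w)‖ ≤ √(p a).re * √(p (star w * a * w)).re := by
  have := norm_inner_le_norm (𝕜 := ℂ) (p.toPreGNS (CFC.sqrt a * 1)) (p.toPreGNS (CFC.sqrt a * w))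
  rwa [inner_toPreGNS_sqrt_mul p ha, norm_toPreGNS_sqrt_mul p ha, norm_toPreGNS_sqrt_mul p ha,
    star_one, one_mul, mul_one] at this

lemma sqrt_re_apply_add_le (ha : 0 ≤ a) (y z : A) :
    √(p (star (y + z) * a * (y + z))).re ≤ √(p (star y * a * y)).re + √(p (star z * a * z)).re := by
  have := norm_add_le (p.toPreGNS (CFC.sqrt a * y)) (p.toPreGNS (CFC.sqrt a * z))
  rwa [← map_add, ← mul_add, norm_toPreGNS_sqrt_mul p ha, norm_toPreGNS_sqrt_mul p ha,
    norm_toPreGNS_sqrt_mul p ha] at this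

end PositiveLinearMap

section aNorm

variable {a b u w : A} {f : A →ₗ[ℂ] ℂ}

lemma MemSa.norm_apply_mul_le (ha : 0 ≤ a) (hf : MemSa a f) (w : A) :
    ‖f (a * w)‖ ≤ √(f (star w * a * w)).re := by
  simpa [hf.2] using hf.1.toPositiveLinearMap.norm_apply_mul_le ha w

lemma MemSa.sq_norm_apply_mul_le (ha : 0 ≤ a) (hf : MemSa a f) (w : A) :
    ‖f (a * w)‖ ^ 2 ≤ (f (star w * a * w)).re :=
  (Real.le_sqrt (norm_nonneg _) (hf.1.re_apply_nonneg (star_left_conjugate_nonneg ha w))).mp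
    (hf.norm_apply_mul_le ha w)

lemma MemSa.norm_apply_mul_le_aNorm (ha : 0 ≤ a) (hf : MemSa a f)
    (hw : BddAbove (aNormSet a w)) : ‖f (a * w)‖ ≤ aNorm a w :=
  (hf.norm_apply_mul_le ha w).trans (hf.sqrt_re_le_aNorm hw)

lemma bddAbove_aNR_set (ha : 0 ≤ a) (hw : BddAbove (aNormSet a w)) :
    BddAbove {r : ℝ | ∃ f : A →ₗ[ℂ] ℂ, MemSa a f ∧ r = ‖f (a * w)‖} :=
  ⟨aNorm a w, by rintro r ⟨f, hf, rfl⟩; exact hf.norm_apply_mul_le_aNorm ha hw⟩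

lemma bddAbove_aNormSet_add (ha : 0 ≤ a) (hb : BddAbove (aNormSet a b))
    (hu : BddAbove (aNormSet a u)) : BddAbove (aNormSet a (b + u)) :=
  ⟨aNorm a b + aNorm a u, by
    rintro r ⟨f, hf, rfl⟩
    exact (hf.1.toPositiveLinearMap.sqrt_re_apply_add_le ha b u).trans
      (add_le_add (hf.sqrt_re_le_aNorm hb) (hf.sqrt_re_le_aNorm hu))⟩

lemma MemSa.re_apply_mul_le (ha : 0 ≤ a) (hf : MemSa a f) (hb : BddAbove (aNormSet a b))
    (u : A) :
    (f (star (b * u) * a * (b * u))).re ≤ aNorm a b ^ 2 * (f (star u * a * u)).re := by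
  set t := (f (star u * a * u)).re
  have ht : 0 ≤ t := hf.1.re_apply_nonneg (star_left_conjugate_nonneg ha u)
  -- `f (u⋆ · u)` need not be a multiple of a state, but `f (u⋆ · u) + ε f` is.
  have hε : ∀ ε > 0,
      (f (star (b * u) * a * (b * u))).re ≤ aNorm a b ^ 2 * t + aNorm a b ^ 2 * ε := by
    intro ε hε
    set g := f ∘ₗ LinearMap.mulLeft ℂ (star u) ∘ₗ LinearMap.mulRight ℂ u + (ε : ℂ) • f
    have hg_apply (y : A) : g y = f (star u * (y * u)) + ε * f y := rfl
    have hg : IsPosLF g := (hf.1.comp_conj u).add (hf.1.smul hε.le)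
    have hga : g a = ((t + ε : ℝ) : ℂ) := by
      rw [hg_apply, hf.2, ← mul_assoc, hf.1.apply_eq_re (star_left_conjugate_nonneg ha u)]
      push_cast; ring
    have hbound := hg.re_apply_le_aNorm_sq_mul (by positivity) hga hb
    have hb0 := hf.1.re_apply_nonneg (star_left_conjugate_nonneg ha b)
    rw [hg_apply, Complex.add_re, Complex.re_ofReal_mul] at hbound
    simp only [star_mul, mul_assoc] at hbound hb0 ⊢
    nlinarith [mul_nonneg hε.le hb0]
  have hcont : Continuous fun ε : ℝ => aNorm a b ^ 2 * t + aNorm a b ^ 2 * ε := by fun_prop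
  exact ge_of_tendsto ((hcont.tendsto' 0 _ (by simp)).mono_left nhdsWithin_le_nhds)
    (eventually_nhdsWithin_of_forall (s := Set.Ioi 0) hε)

lemma bddAbove_aNormSet_mul (ha : 0 ≤ a) (hb : BddAbove (aNormSet a b))
    (hu : BddAbove (aNormSet a u)) : BddAbove (aNormSet a (b * u)) :=
  ⟨aNorm a b * aNorm a u, by
    rintro r ⟨f, hf, rfl⟩
    refine Real.sqrt_le_iff.mpr ⟨mul_nonneg (aNorm_nonneg a b) (aNorm_nonneg a u), ?_⟩
    calc (f (star (b * u) * a * (b * u))).re ≤ aNorm a b ^ 2 * (f (star u * a * u)).re :=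
          hf.re_apply_mul_le ha hb u
      _ ≤ aNorm a b ^ 2 * aNorm a u ^ 2 := by gcongr; exact hf.re_le_aNorm_sq hu
      _ = (aNorm a b * aNorm a u) ^ 2 := by ring⟩

end aNorm

lemma IsPosLF.apply_mul_aRealPart {a x y : A} {f : A →ₗ[ℂ] ℂ} (hf : IsPosLF f)
    (ha : IsSelfAdjoint a) (h : IsAAdjoint a x y) : f (a * aRealPart x y) = (f (a * x)).re := by
  rw [aRealPart, mul_smul_comm, map_smul, mul_add, map_add, hf.apply_mul_of_isAAdjoint ha h,
    Complex.star_def, Complex.add_conj, smul_eq_mul]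
  push_cast
  ring

lemma IsPosLF.re_apply_mul_aRealPart_sq {a x y : A} {f : A →ₗ[ℂ] ℂ} (hf : IsPosLF f)
    (ha : IsSelfAdjoint a) (h : IsAAdjoint a x y) :
    (f (a * (aRealPart x y * aRealPart x y))).re =
      ((f (a * (x * x))).re * 2 + (f (a * (x * y + y * x))).re) / 4 := by
  rw [aRealPart_mul_self, mul_smul_comm, map_smul, mul_add, mul_add, map_add, map_add,
    hf.apply_mul_of_isAAdjoint ha (h.mul h), smul_eq_mul, Complex.star_def]
  simp only [Complex.mul_re, Complex.add_re, Complex.conj_re]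
  norm_num
  ring

lemma MemSa.sq_norm_apply_mul_le_of_isAAdjoint {a x xadj : A} {f : A →ₗ[ℂ] ℂ} (ha : 0 ≤ a)
    (hf : MemSa a f) (hadj : IsAAdjoint a x xadj)
    (hxx : BddAbove (aNormSet a (x * x))) (hS : BddAbove (aNormSet a (x * xadj + xadj * x))) :
    ‖f (a * x)‖ ^ 2 ≤ (aNR a (x * x) + aNorm a (x * xadj + xadj * x) / 2) / 2 := by
  obtain ⟨c, hc, hcs⟩ := Complex.exists_norm_eq_one_mul_eq_norm (f (a * x))
  have hcc : c * star c = 1 := by simp [Complex.mul_conj', hc]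
  have hadj' : IsAAdjoint a (c • x) (star c • xadj) := hadj.smul c
  set H := aRealPart (c • x) (star c • xadj)
  have hfH : f (a * H) = ‖f (a * x)‖ := by
    rw [hf.1.apply_mul_aRealPart ha.isSelfAdjoint hadj', mul_smul_comm, map_smul, smul_eq_mul,
      hcs, Complex.ofReal_re]
  have hS_eq : c • x * (star c • xadj) + star c • xadj * (c • x) = x * xadj + xadj * x := by
    rw [smul_mul_smul_comm, smul_mul_smul_comm, hcc, mul_comm (star c), hcc, one_smul, one_smul]
  have h₁ : (f (a * (c • x * (c • x)))).re ≤ aNR a (x * x) := by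
    rw [smul_mul_smul_comm, mul_smul_comm, map_smul]
    refine (Complex.re_le_norm _).trans ?_
    simpa [hc] using hf.norm_apply_mul_le_aNR (bddAbove_aNR_set ha hxx)
  have h₂ : (f (a * (x * xadj + xadj * x))).re ≤ aNorm a (x * xadj + xadj * x) :=
    (Complex.re_le_norm _).trans (hf.norm_apply_mul_le_aNorm ha hS)
  calc ‖f (a * x)‖ ^ 2 = ‖f (a * H)‖ ^ 2 := by rw [hfH, Complex.norm_real, norm_norm]
    _ ≤ (f (star H * a * H)).re := hf.sq_norm_apply_mul_le ha H
    _ = (f (a * (H * H))).re := by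
      rw [(hadj'.aRealPart ha.isSelfAdjoint).star_mul_mul_self]
    _ = ((f (a * (c • x * (c • x)))).re * 2 + (f (a * (x * xadj + xadj * x))).re) / 4 := by
      rw [hf.1.re_apply_mul_aRealPart_sq ha.isSelfAdjoint hadj', hS_eq]
    _ ≤ _ := by linarith

theorem stmt8_general (a : A) (ha : 0 ≤ a)
    (x xadj : A) (hadj : a * xadj = star x * a)
    (hx : BddAbove (aNormSet a x)) (hxadj : BddAbove (aNormSet a xadj))
    (φ : ℝ → ℝ) (hφ : IsOrlicz φ) :
    φ (aNR a x ^ 2) ≤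
      (1 / 2) * φ (aNR a (x * x)) + (1 / 2) * φ (aNorm a (x * xadj + xadj * x) / 2) := by
  have hxx : BddAbove (aNormSet a (x * x)) := bddAbove_aNormSet_mul ha hx hx
  have hS : BddAbove (aNormSet a (x * xadj + xadj * x)) :=
    bddAbove_aNormSet_add ha (bddAbove_aNormSet_mul ha hx hxadj) (bddAbove_aNormSet_mul ha hxadj hx)
  have hS₀ : 0 ≤ aNorm a (x * xadj + xadj * x) / 2 := div_nonneg (aNorm_nonneg _ _) zero_le_two
  have hv : aNR a x ^ 2 ≤ (aNR a (x * x) + aNorm a (x * xadj + xadj * x) / 2) / 2 :=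
    aNR_sq_le (div_nonneg (add_nonneg (aNR_nonneg _ _) hS₀) zero_le_two) fun f hf =>
      hf.sq_norm_apply_mul_le_of_isAAdjoint ha hadj hxx hS
  exact hφ.convexOn.apply_le_midpoint_of_le hφ.monotoneOn
    (sq_nonneg (aNR a x)) (aNR_nonneg a (x * x)) hS₀ hv

/-- `φ(vₐ(x)²) ≤ ½ φ(vₐ(x²)) + ½ φ(‖x x^{#a} + x^{#a} x‖ₐ / 2)`. -/
theorem stmt8 (a : A) (ha : 0 ≤ a) (ha0 : a ≠ 0)
    (x xadj : A) (hadj : a * xadj = star x * a)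
    (hx : BddAbove (aNormSet a x)) (hxadj : BddAbove (aNormSet a xadj))
    (φ : ℝ → ℝ) (hφ : IsOrlicz φ) :
    φ (aNR a x ^ 2) ≤
      (1 / 2) * φ (aNR a (x * x)) + (1 / 2) * φ (aNorm a (x * xadj + xadj * x) / 2) :=
  stmt8_general a ha x xadj hadj hx hxadj φ hφ

end
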